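/- arXiv:2112.10340 — 4 statements merged into one kernel-verified Lean document; each statement's English description precedes it below -/
import Mathlib

section
/- Let q be an odd prime power, A = 𝔽_q[T], P ∈ A monic irreducible, α ≥ 2 an integer, and m ∈ A monic with P^{α−1} exactly dividing m; write m' = m/P^{α−1} ∈ A and set n = P·m. For Q ∈ A define the matrix M_Q = (1 − mQ, P^{α−1}Q; −m·m'·Q, 1 + mQ), which has entries in A and determinant 1 (so M_Q ∈ Γ₀(m)). Then for every γ ∈ Γ₀(m) there exists a unique Q ∈ A with deg Q < deg P such that γ = δ·M_Q for some δ ∈ Γ₀(n). In other words, {M_Q : Q ∈ A, deg Q < deg P} is a complete set of representatives for the right cosets Γ₀(n)\Γ₀(m). -/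
/-!
Write `M_Q = 1 + Q • N` with `N = (-m, u; -m v, m)`; when `u v = m` the matrix `N` squares to
zero, so `Q ↦ M_Q` is additive and `M_Q⁻¹ = M_{-Q}`. Hence `γ = δ M_Q` with `δ ∈ Γ₀(P m)` exactly
when `γ M_{-Q} ∈ Γ₀(P m)`. If the lower-left entry of `γ` is `m c`, this is the linear congruence
`c + Q (m c + d m') ≡ 0 (mod P)`, `d = γ₁₁`. Its coefficient is a unit modulo `P`: `P ∣ m`,
`P ∤ d` because `det γ` is a unit, and `P ∤ m'` because `P^(α-1)` divides `m` exactly. So it has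
exactly one solution of degree less than `deg P`.
-/

open Polynomial Matrix

/-- `Γ₀(n)` as a set of 2×2 matrices over `A = 𝔽_q[T]`: entries in `A`, determinant a
nonzero constant (i.e. in `𝔽_q^×`), and lower-left entry divisible by `n`. -/
def IsGamma0 {F : Type*} [Field F] (n : F[X]) (M : Matrix (Fin 2) (Fin 2) F[X]) : Prop :=
  (∃ ζ : Fˣ, M.det = C (ζ : F)) ∧ n ∣ M 1 0

namespace Polynomial

lemma eq_of_dvd_sub_of_degree_lt {R : Type*} [CommRing R] [IsDomain R] {P Q Q' : R[X]}
    (h : P ∣ Q - Q') (hQ : Q.degree < P.degree) (hQ' : Q'.degree < P.degree) : Q = Q' :=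
  sub_eq_zero.mp <| eq_zero_of_dvd_of_degree_lt h <|
    (degree_sub_le Q Q').trans_lt (max_lt hQ hQ')

lemma existsUnique_degree_lt_dvd_add_mul {F : Type*} [Field F] {P : F[X]} (hP : Irreducible P)
    (e : F[X]) {f : F[X]} (hf : ¬ P ∣ f) : ∃! Q : F[X], Q.degree < P.degree ∧ P ∣ e + Q * f := by
  obtain ⟨u, v, huv⟩ := hP.coprime_iff_not_dvd.mpr hf
  have h₀ : P ∣ e + -(e * v) % P * f := by
    refine ⟨e * u - (-(e * v) / P) * f, ?_⟩
    rw [EuclideanDomain.mod_eq_sub_mul_div]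
    linear_combination (-e) * huv
  refine ⟨-(e * v) % P, ⟨degree_mod_lt _ hP.ne_zero, h₀⟩, fun Q ⟨hQ, hdvd⟩ => ?_⟩
  have hdvd' : P ∣ (Q - -(e * v) % P) * f := by
    convert dvd_sub hdvd h₀ using 1
    ring
  exact eq_of_dvd_sub_of_degree_lt ((hP.prime.dvd_mul.mp hdvd').resolve_right hf) hQ
    (degree_mod_lt _ hP.ne_zero)

end Polynomial

section CosetRep

variable {R : Type*} [CommRing R] (m u v : R)

def cosetRep (Q : R) : Matrix (Fin 2) (Fin 2) R :=
  !![1 - m * Q, u * Q; -(m * v * Q), 1 + m * Q]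

variable {m u v}

lemma cosetRep_mul_cosetRep (h : u * v = m) (Q Q' : R) :
    cosetRep m u v Q * cosetRep m u v Q' = cosetRep m u v (Q + Q') := by
  rw [cosetRep, cosetRep, cosetRep, mul_fin_two, ← h]
  ext i j
  fin_cases i <;> fin_cases j <;> simp <;> ring

lemma cosetRep_zero : cosetRep m u v 0 = 1 := by
  simp [cosetRep, one_fin_two]

lemma cosetRep_mul_cosetRep_neg (h : u * v = m) (Q : R) :
    cosetRep m u v Q * cosetRep m u v (-Q) = 1 := by
  rw [cosetRep_mul_cosetRep h, add_neg_cancel, cosetRep_zero]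

lemma det_cosetRep (h : u * v = m) (Q : R) : (cosetRep m u v Q).det = 1 := by
  rw [cosetRep, det_fin_two_of, ← h]
  ring

lemma mul_cosetRep_apply_one_zero (γ : Matrix (Fin 2) (Fin 2) R) (Q : R) :
    (γ * cosetRep m u v Q) 1 0 = γ 1 0 * (1 - m * Q) - γ 1 1 * (m * v * Q) := by
  simp [cosetRep, mul_apply, Fin.sum_univ_two, sub_eq_add_neg]

end CosetRep

section Gamma0

variable {F : Type*} [Field F]

lemma isGamma0_cosetRep {m u v : F[X]} (h : u * v = m) (Q : F[X]) :
    IsGamma0 m (cosetRep m u v Q) :=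
  ⟨⟨1, by rw [det_cosetRep h, Units.val_one, C_1]⟩,
    dvd_neg.mpr (dvd_mul_of_dvd_left (dvd_mul_right m v) Q)⟩

lemma IsGamma0.not_dvd_apply_one_one {m P : F[X]} {γ : Matrix (Fin 2) (Fin 2) F[X]}
    (hγ : IsGamma0 m γ) (hP : ¬ IsUnit P) (hPm : P ∣ m) : ¬ P ∣ γ 1 1 := by
  obtain ⟨⟨ζ, hζ⟩, hm⟩ := hγ
  intro hd
  refine hP (isUnit_of_dvd_unit ?_ (isUnit_C.mpr ζ.isUnit))
  rw [← hζ, det_fin_two]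
  exact dvd_sub (hd.mul_left _) ((hPm.trans hm).mul_left _)

lemma exists_isGamma0_mul_cosetRep_iff {m u v : F[X]} (h : u * v = m) (n : F[X])
    (γ : Matrix (Fin 2) (Fin 2) F[X]) (Q : F[X]) :
    (∃ δ, IsGamma0 n δ ∧ γ = δ * cosetRep m u v Q) ↔ IsGamma0 n (γ * cosetRep m u v (-Q)) := by
  refine ⟨?_, fun hδ => ⟨_, hδ, ?_⟩⟩
  · rintro ⟨δ, hδ, rfl⟩
    rwa [Matrix.mul_assoc, cosetRep_mul_cosetRep_neg h, Matrix.mul_one]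
  · rw [Matrix.mul_assoc, cosetRep_mul_cosetRep h, neg_add_cancel, cosetRep_zero, Matrix.mul_one]

lemma isGamma0_mul_cosetRep_neg_iff {m u v : F[X]} (h : u * v = m) (hm : m ≠ 0) (P : F[X])
    {γ : Matrix (Fin 2) (Fin 2) F[X]} (hγ : IsGamma0 m γ) {c : F[X]} (hc : γ 1 0 = m * c)
    (Q : F[X]) :
    IsGamma0 (P * m) (γ * cosetRep m u v (-Q)) ↔ P ∣ c + Q * (m * c + γ 1 1 * v) := by
  obtain ⟨⟨ζ, hζ⟩, -⟩ := hγ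
  have hentry : (γ * cosetRep m u v (-Q)) 1 0 = (c + Q * (m * c + γ 1 1 * v)) * m := by
    rw [mul_cosetRep_apply_one_zero, hc]
    ring
  rw [IsGamma0, det_mul, det_cosetRep h, mul_one, hentry, mul_dvd_mul_iff_right hm]
  exact and_iff_right ⟨ζ, hζ⟩

end Gamma0

theorem statement4_general {F : Type*} [Field F]
    (P : F[X]) (hPirr : Irreducible P)
    (α : ℕ) (hα : 2 ≤ α)
    (m m' : F[X]) (hm' : m = P ^ (α - 1) * m')
    (hexact : ¬ P ^ α ∣ m) :
    (∀ Q : F[X],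
      (!![1 - m * Q, P ^ (α - 1) * Q; -(m * m' * Q), 1 + m * Q]).det = 1 ∧
      IsGamma0 m !![1 - m * Q, P ^ (α - 1) * Q; -(m * m' * Q), 1 + m * Q]) ∧
    ∀ γ : Matrix (Fin 2) (Fin 2) F[X], IsGamma0 m γ →
      ∃! Q : F[X], Q.degree < P.degree ∧
        ∃ δ : Matrix (Fin 2) (Fin 2) F[X], IsGamma0 (P * m) δ ∧
          γ = δ * !![1 - m * Q, P ^ (α - 1) * Q; -(m * m' * Q), 1 + m * Q] := by
  have hm : P ^ (α - 1) * m' = m := hm'.symm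
  have hm0 : m ≠ 0 := by
    rintro rfl
    exact hexact (dvd_zero _)
  refine ⟨fun Q => ⟨det_cosetRep hm Q, isGamma0_cosetRep hm Q⟩, fun γ hγ => ?_⟩
  obtain ⟨c, hc⟩ := hγ.2
  have hPm : P ∣ m := hm ▸ dvd_mul_of_dvd_left (dvd_pow_self P (by omega)) m'
  have hPm' : ¬ P ∣ m' := by
    contrapose! hexact
    calc P ^ α = P ^ (α - 1) * P := by rw [← pow_succ, Nat.sub_add_cancel (by omega)]
      _ ∣ m := hm ▸ mul_dvd_mul_left _ hexact
  have hf : ¬ P ∣ m * c + γ 1 1 * m' := by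
    rw [dvd_add_right (hPm.mul_right c)]
    exact hPirr.prime.not_dvd_mul (hγ.not_dvd_apply_one_one hPirr.not_isUnit hPm) hPm'
  refine (existsUnique_congr fun Q => and_congr_right' ?_).mpr
    (existsUnique_degree_lt_dvd_add_mul hPirr c hf)
  exact (exists_isGamma0_mul_cosetRep_iff hm _ γ Q).trans
    (isGamma0_mul_cosetRep_neg_iff hm hm0 P hγ hc Q)

/-- Let `q` be an odd prime power, `A = 𝔽_q[T]`, `P` monic irreducible,
`α ≥ 2`, `m` monic with `P^(α−1)` exactly dividing `m`; write `m' = m / P^(α−1)` and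
`n = P·m`.  For `Q ∈ A` let `M_Q = (1 − mQ, P^(α−1)Q; −m·m'·Q, 1 + mQ)`; it has
entries in `A` and determinant `1` (so `M_Q ∈ Γ₀(m)`).  Then for every `γ ∈ Γ₀(m)`
there is a unique `Q ∈ A` with `deg Q < deg P` such that `γ = δ·M_Q` for some
`δ ∈ Γ₀(n)`; i.e. the `M_Q` are a complete set of representatives for `Γ₀(n)\Γ₀(m)`. -/
theorem statement4 {F : Type*} [Field F] [Fintype F] (p r : ℕ) (hp : p.Prime)
    (hodd : Odd p) (hr : 0 < r) (hcard : Fintype.card F = p ^ r)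
    (P : F[X]) (hPmonic : P.Monic) (hPirr : Irreducible P)
    (α : ℕ) (hα : 2 ≤ α)
    (m m' : F[X]) (hmmonic : m.Monic) (hm' : m = P ^ (α - 1) * m')
    (hexact : ¬ P ^ α ∣ m) :
    (∀ Q : F[X],
      (!![1 - m * Q, P ^ (α - 1) * Q; -(m * m' * Q), 1 + m * Q]).det = 1 ∧
      IsGamma0 m !![1 - m * Q, P ^ (α - 1) * Q; -(m * m' * Q), 1 + m * Q]) ∧
    ∀ γ : Matrix (Fin 2) (Fin 2) F[X], IsGamma0 m γ →
      ∃! Q : F[X], Q.degree < P.degree ∧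
        ∃ δ : Matrix (Fin 2) (Fin 2) F[X], IsGamma0 (P * m) δ ∧
          γ = δ * !![1 - m * Q, P ^ (α - 1) * Q; -(m * m' * Q), 1 + m * Q] :=
  statement4_general P hPirr α hα m m' hm' hexact
end

section
/- Let q be an odd prime power, A = 𝔽_q[T], K = 𝔽_q(T), and n ∈ A monic. Let P and P₁ be distinct monic irreducible polynomials in A with P^α exactly dividing n (α ≥ 1) and P₁ dividing n. Let b, d ∈ A satisfy P^{2α}·d − n·b = P^α, and set W = (P^α, b; n, P^α·d). Then for every Q ∈ A with deg Q < deg P₁ there exists a unique Q' ∈ A with deg Q' < deg P₁ such that, computing in GL₂(K), ((1, Q; 0, P₁)·W)·(W·(1, Q'; 0, P₁))^{-1} ∈ Γ₀(n); equivalently, (1, Q; 0, P₁)·W = γ·W·(1, Q'; 0, P₁) for some γ ∈ Γ₀(n) with det γ = 1. -/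
/-!
Over `K` the only candidate is `γ = M W N⁻¹ W⁻¹` with `M = (1, Q; 0, P₁)`, `N = (1, Q'; 0, P₁)`,
and `det γ = 1` is automatic because `det (M W) = det (W N)`. Writing `X = P^α` and `n = X m`,
the hypothesis on `b, d` becomes `X d - m b = 1`, and `P₁ ∣ m` since `P₁` is prime to `X`.
Then `γ` has entries in `A` exactly when `P₁ ∣ X Q' - (Q + b)`, and as `X` is a unit modulo
`P₁` this congruence has exactly one solution `Q'` of degree less than `deg P₁`.
-/

open Polynomial Matrix

theorem Matrix.of_fin_two_eq_iff {α : Type*} {a b c d a' b' c' d' : α} :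
    !![a, b; c, d] = !![a', b'; c', d'] ↔ a = a' ∧ b = b' ∧ c = c' ∧ d = d' := by
  simp only [← Matrix.ext_iff, Fin.forall_fin_two, of_apply, cons_val', cons_val_zero,
    cons_val_one, empty_val', cons_val_fin_one]
  tauto

theorem Polynomial.isCoprime_of_monic_of_irreducible_of_ne {K : Type*} [Field K] {p q : K[X]}
    (hp : p.Monic) (hq : q.Monic) (hpi : Irreducible p) (hqi : Irreducible q) (hne : p ≠ q) :
    IsCoprime p q :=
  hpi.coprime_iff_not_dvd.2 fun h => hne (eq_of_monic_of_associated hp hq (hpi.associated_of_dvd hqi h))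

theorem Polynomial.existsUnique_degree_lt_dvd_mul_sub {R : Type*} [CommRing R] [IsDomain R]
    {p a : R[X]} (hp : p.Monic) (hpa : IsCoprime p a) (c : R[X]) :
    ∃! x : R[X], x.degree < p.degree ∧ p ∣ a * x - c := by
  obtain ⟨u, v, huv⟩ := id hpa
  set r := v * c %ₘ p
  have hr : p ∣ a * r - c :=
    ⟨-(u * c) - a * (v * c /ₘ p), by linear_combination a * modByMonic_add_div (v * c) p + c * huv⟩
  refine ⟨r, ⟨degree_modByMonic_lt _ hp, hr⟩, fun y ⟨hy, hyc⟩ => ?_⟩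
  have hdvd : p ∣ y - r := hpa.dvd_of_dvd_mul_left <| by
    simpa only [mul_sub, sub_sub_sub_cancel_right] using dvd_sub hyc hr
  refine sub_eq_zero.1 (eq_zero_of_dvd_of_degree_lt hdvd ?_)
  exact (degree_sub_le _ _).trans_lt (max_lt hy (degree_modByMonic_lt _ hp))

section Gamma0

variable {R : Type*} [CommRing R] [IsDomain R] {X m b d Q Q' P₁ : R}

theorem exists_Gamma0_of_dvd (hX : X ≠ 0) (hP₁ : P₁ ≠ 0) (hdet : X * d - m * b = 1)
    (hm : P₁ ∣ m) (hQ' : P₁ ∣ X * Q' - (Q + b)) :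
    ∃ γ : Matrix (Fin 2) (Fin 2) R, γ.det = 1 ∧ X * m ∣ γ 1 0 ∧
      !![1, Q; 0, P₁] * !![X, b; X * m, X * d] =
        γ * (!![X, b; X * m, X * d] * !![1, Q'; 0, P₁]) := by
  obtain ⟨k, hk⟩ : P₁ ∣ b + Q * X * d - Q' * X * (1 + Q * m) := by
    have : b + Q * X * d - Q' * X * (1 + Q * m) =
        -(X * Q' - (Q + b)) + m * (Q * (b - Q' * X)) := by
      linear_combination Q * hdet
    rw [this]
    exact dvd_add (dvd_neg.2 hQ') (dvd_mul_of_dvd_left hm _)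
  -- `M W N⁻¹ W⁻¹` computed over the fraction field, with `k` in place of its one fraction.
  set γ : Matrix (Fin 2) (Fin 2) R :=
    !![X * d * (1 + Q * m) - m * k, -b * (1 + Q * m) + k;
       X * m * (d * (P₁ - 1) + m * Q'), X * d - P₁ * m * b - Q' * X * m]
  have hγ : !![1, Q; 0, P₁] * !![X, b; X * m, X * d] =
      γ * (!![X, b; X * m, X * d] * !![1, Q'; 0, P₁]) := by
    simp only [γ, mul_fin_two, of_fin_two_eq_iff]
    refine ⟨?_, ?_, ?_, ?_⟩
    · linear_combination -(X + Q * X * m) * hdet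
    · linear_combination hk - ((1 + Q * m) * X * Q' + P₁ * k) * hdet
    · linear_combination -(P₁ * X * m) * hdet
    · linear_combination -(P₁ * X * d) * hdet
  refine ⟨γ, ?_, ⟨_, rfl⟩, hγ⟩
  have h := congrArg Matrix.det hγ
  simp only [det_mul, det_fin_two_of] at h
  apply mul_right_cancel₀ (mul_ne_zero hX hP₁)
  linear_combination -h - (γ.det - 1) * X * P₁ * hdet

theorem dvd_of_eq_Gamma0_mul (hX : X ≠ 0) (hdet : X * d - m * b = 1) (hm : P₁ ∣ m)
    {γ : Matrix (Fin 2) (Fin 2) R}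
    (hγ : !![1, Q; 0, P₁] * !![X, b; X * m, X * d] =
      γ * (!![X, b; X * m, X * d] * !![1, Q'; 0, P₁])) :
    P₁ ∣ X * Q' - (Q + b) := by
  rw [eta_fin_two γ] at hγ
  simp only [mul_fin_two, of_fin_two_eq_iff] at hγ
  obtain ⟨h00, h01, -⟩ := hγ
  have hγ00 : γ 0 0 = 1 + Q * m - γ 0 1 * m := mul_left_cancel₀ hX (by linear_combination -h00)
  have : X * Q' - (Q + b) = P₁ * (-b - γ 0 1 * X * d) +
      m * (Q * b - (Q - γ 0 1) * (X * Q' + P₁ * b) - γ 0 1 * X * Q') := by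
    linear_combination -h01 + Q * hdet - (X * Q' + P₁ * b) * hγ00
  rw [this]
  exact dvd_add (dvd_mul_right _ _) (dvd_mul_of_dvd_left hm _)

theorem exists_Gamma0_iff_dvd (hX : X ≠ 0) (hP₁ : P₁ ≠ 0) (hdet : X * d - m * b = 1)
    (hm : P₁ ∣ m) :
    (∃ γ : Matrix (Fin 2) (Fin 2) R, γ.det = 1 ∧ X * m ∣ γ 1 0 ∧
      !![1, Q; 0, P₁] * !![X, b; X * m, X * d] =
        γ * (!![X, b; X * m, X * d] * !![1, Q'; 0, P₁])) ↔ P₁ ∣ X * Q' - (Q + b) :=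
  ⟨fun ⟨_, _, _, hγ⟩ => dvd_of_eq_Gamma0_mul hX hdet hm hγ, exists_Gamma0_of_dvd hX hP₁ hdet hm⟩

end Gamma0

theorem statement7_general {F : Type*} [Field F]
    (n : F[X])
    (P P₁ : F[X]) (hPmonic : P.Monic) (hP₁monic : P₁.Monic)
    (hPirr : Irreducible P) (hP₁irr : Irreducible P₁) (hne : P ≠ P₁)
    (α : ℕ) (hdvd : P ^ α ∣ n)
    (hP₁dvd : P₁ ∣ n)
    (b d : F[X]) (hbd : P ^ (2 * α) * d - n * b = P ^ α) :
    ∀ Q : F[X], Q.degree < P₁.degree →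
      ∃! Q' : F[X], Q'.degree < P₁.degree ∧
        ∃ γ : Matrix (Fin 2) (Fin 2) F[X], γ.det = 1 ∧ n ∣ γ 1 0 ∧
          !![1, Q; 0, P₁] * !![P ^ α, b; n, P ^ α * d] =
            γ * (!![P ^ α, b; n, P ^ α * d] * !![1, Q'; 0, P₁]) := by
  intro Q _
  obtain ⟨m, rfl⟩ := hdvd
  have hX : P ^ α ≠ 0 := pow_ne_zero _ hPmonic.ne_zero
  have hcop : IsCoprime P₁ (P ^ α) :=
    (isCoprime_of_monic_of_irreducible_of_ne hP₁monic hPmonic hP₁irr hPirr hne.symm).pow_right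
  have hm : P₁ ∣ m := hcop.dvd_of_dvd_mul_left hP₁dvd
  have hdet : P ^ α * d - m * b = 1 :=
    mul_left_cancel₀ hX (by linear_combination hbd)
  simpa only [exists_Gamma0_iff_dvd hX hP₁monic.ne_zero hdet hm] using
    existsUnique_degree_lt_dvd_mul_sub hP₁monic hcop (Q + b)

/-- Let `q` be an odd prime power, `A = 𝔽_q[T]`, `n ∈ A` monic.  Let `P`
and `P₁` be distinct monic irreducibles with `P^α` exactly dividing `n` (`α ≥ 1`) and
`P₁ ∣ n`.  Let `b, d ∈ A` with `P^(2α)·d − n·b = P^α` and `W = (P^α, b; n, P^α·d)`.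
Then for every `Q ∈ A` with `deg Q < deg P₁` there is a unique `Q' ∈ A` with
`deg Q' < deg P₁` such that `(1, Q; 0, P₁)·W = γ·W·(1, Q'; 0, P₁)` for some
`γ ∈ Γ₀(n)` with `det γ = 1` (equivalently, `((1,Q;0,P₁)·W)·(W·(1,Q';0,P₁))⁻¹ ∈ Γ₀(n)`
in `GL₂(K)`). -/
theorem statement7 {F : Type*} [Field F] [Fintype F] (p r : ℕ) (hp : p.Prime)
    (hodd : Odd p) (hr : 0 < r) (hcard : Fintype.card F = p ^ r)
    (n : F[X]) (hnmonic : n.Monic)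
    (P P₁ : F[X]) (hPmonic : P.Monic) (hP₁monic : P₁.Monic)
    (hPirr : Irreducible P) (hP₁irr : Irreducible P₁) (hne : P ≠ P₁)
    (α : ℕ) (hα : 1 ≤ α) (hdvd : P ^ α ∣ n) (hexact : ¬ P ^ (α + 1) ∣ n)
    (hP₁dvd : P₁ ∣ n)
    (b d : F[X]) (hbd : P ^ (2 * α) * d - n * b = P ^ α) :
    ∀ Q : F[X], Q.degree < P₁.degree →
      ∃! Q' : F[X], Q'.degree < P₁.degree ∧
        ∃ γ : Matrix (Fin 2) (Fin 2) F[X], γ.det = 1 ∧ n ∣ γ 1 0 ∧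
          !![1, Q; 0, P₁] * !![P ^ α, b; n, P ^ α * d] =
            γ * (!![P ^ α, b; n, P ^ α * d] * !![1, Q'; 0, P₁]) :=
  statement7_general n P P₁ hPmonic hP₁monic hPirr hP₁irr hne α hdvd hP₁dvd b d hbd
end

section
/- Let p be an odd prime, q = p^r, and let P ∈ 𝔽_q[T] be a monic polynomial of degree 1. Let l and x be integers with 1 ≤ l ≤ q − 2 and 0 ≤ x ≤ q, set k = x(q−1) + l(q+1), and set x₀ = min(x, l−1). Define the polynomial S = Σ_{j=0}^{x₀} (−1)^{l+j} · C(l−1, j) · C(x, j) · P^{l−j} · (T^q − T)^j ∈ 𝔽_q[T], where C(·,·) are integer binomial coefficients reduced modulo p. Then S ≠ 0; its degree equals l + j_max·(q−1), where j_max is the largest index 0 ≤ j ≤ x₀ with C(l−1, j)·C(x, j) not divisible by p (this set of indices is nonempty since it contains j = 0); and 0 < deg S < k/2. -/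
open Polynomial Finset

/-!
The summands are scalar multiples of the monic polynomials `P ^ (l - j) * (T ^ q - T) ^ j`, whose
degrees `l + j (q - 1)` strictly increase with `j`. Hence the degree of `S` is that of the last
summand whose coefficient `± C(l-1, j) C(x, j)` survives reduction mod `p`, and the bound
`2 j ≤ x + l - 1` on its index gives `2 deg S < k`.
-/

theorem natDegree_sum_range_C_mul_monic {R : Type*} [Semiring R] {c : ℕ → R} {M : ℕ → R[X]}
    {m n : ℕ} (hmn : m ≤ n) (hMm : (M m).Monic) (hcm : c m ≠ 0)
    (hc : ∀ j, m < j → j ≤ n → c j = 0)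
    (hlt : ∀ j < m, (M j).natDegree < (M m).natDegree) :
    (∑ j ∈ range (n + 1), C (c j) * M j).natDegree = (M m).natDegree := by
  have hterm : ∀ j ∈ range (n + 1), j ≠ m → (C (c j) * M j).coeff (M m).natDegree = 0 := by
    intro j hj hjm
    rcases hjm.lt_or_gt with h | h
    · rw [coeff_C_mul, coeff_eq_zero_of_natDegree_lt (hlt j h), mul_zero]
    · rw [hc j h (Nat.lt_succ_iff.mp (mem_range.mp hj)), C_0, zero_mul, coeff_zero]
  have hcoeff : (∑ j ∈ range (n + 1), C (c j) * M j).coeff (M m).natDegree = c m := by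
    rw [finsetSum_coeff, sum_eq_single_of_mem m (mem_range.mpr (Nat.lt_succ_of_le hmn)) hterm,
      coeff_C_mul, hMm.coeff_natDegree, mul_one]
  refine le_antisymm (natDegree_sum_le_of_forall_le _ _ fun j hj => ?_)
    (le_natDegree_of_ne_zero (hcoeff ▸ hcm))
  rcases le_or_gt j m with h | h
  · refine (natDegree_C_mul_le _ _).trans ?_
    rcases h.lt_or_eq with h | rfl
    exacts [(hlt j h).le, le_rfl]
  · rw [hc j h (Nat.lt_succ_iff.mp (mem_range.mp hj)), C_0, zero_mul, natDegree_zero]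
    exact Nat.zero_le _

theorem monic_X_pow_sub_X {R : Type*} [Ring R] [Nontrivial R] {q : ℕ} (hq : 1 < q) :
    (X ^ q - X : R[X]).Monic :=
  monic_X_pow_sub (degree_X_le.trans_lt (by exact_mod_cast hq))

theorem natDegree_pow_sub_mul_X_pow_sub_X_pow {R : Type*} [Ring R] [Nontrivial R] {P : R[X]}
    (hP : P.Monic) (hPdeg : P.natDegree = 1) {q l j : ℕ} (hq : 1 < q) (hj : j ≤ l) :
    (P ^ (l - j) * (X ^ q - X) ^ j).natDegree = l + j * (q - 1) := by
  rw [(hP.pow _).natDegree_mul ((monic_X_pow_sub_X hq).pow _), hP.natDegree_pow,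
    (monic_X_pow_sub_X hq).natDegree_pow, hPdeg,
    natDegree_sub_eq_left_of_natDegree_lt (by simpa using hq), natDegree_X_pow]
  zify [hj, hq.le]
  ring

theorem two_mul_add_mul_lt {l x j q : ℕ} (hl : 1 ≤ l) (hq : 2 ≤ q) (hjx : j ≤ x)
    (hjl : j ≤ l - 1) : 2 * (l + j * (q - 1)) < x * (q - 1) + l * (q + 1) := by
  obtain ⟨m, rfl⟩ : ∃ m, q = m + 1 := ⟨q - 1, by omega⟩
  have h : (2 * j + 1) * m ≤ (x + l) * m := Nat.mul_le_mul_right m (by omega)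
  rw [Nat.add_sub_cancel]
  nlinarith

theorem natDegree_sum_choose_mul_pow_mul_X_pow_sub_X_pow {F : Type*} [Field F] {p : ℕ}
    [CharP F p] {P : F[X]} (hP : P.Monic) (hPdeg : P.natDegree = 1)
    {q l x n m : ℕ} (hq : 1 < q) (hnl : n ≤ l - 1) (hmn : m ≤ n)
    (hm : ¬ p ∣ (l - 1).choose m * x.choose m)
    (hdvd : ∀ j, m < j → j ≤ n → p ∣ (l - 1).choose j * x.choose j) :
    (∑ j ∈ range (n + 1), (-1) ^ (l + j) * ((l - 1).choose j : F[X]) * (x.choose j : F[X]) *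
      P ^ (l - j) * (X ^ q - X) ^ j).natDegree = l + m * (q - 1) := by
  have hcoeff : ∀ j, (-1 : F) ^ (l + j) * ((l - 1).choose j * x.choose j : ℕ) = 0 ↔
      p ∣ (l - 1).choose j * x.choose j := fun j => by
    simp only [mul_eq_zero, pow_eq_zero_iff', neg_eq_zero, one_ne_zero, false_and, false_or,
      CharP.cast_eq_zero_iff F p]
  have hdegM : ∀ j ≤ n, (P ^ (l - j) * (X ^ q - X) ^ j).natDegree = l + j * (q - 1) :=
    fun j hj => natDegree_pow_sub_mul_X_pow_sub_X_pow hP hPdeg hq (by omega)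
  have hsum : ∀ j ∈ range (n + 1), (-1) ^ (l + j) * ((l - 1).choose j : F[X]) *
      (x.choose j : F[X]) * P ^ (l - j) * (X ^ q - X) ^ j = C ((-1 : F) ^ (l + j) *
        ((l - 1).choose j * x.choose j : ℕ)) * (P ^ (l - j) * (X ^ q - X) ^ j) := fun j _ => by
    simp only [map_mul, map_pow, map_neg, map_one, map_natCast, Nat.cast_mul]
    ring
  rw [sum_congr rfl hsum, natDegree_sum_range_C_mul_monic hmn
    ((hP.pow _).mul ((monic_X_pow_sub_X hq).pow _)) (mt (hcoeff m).mp hm)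
    (fun j h1 h2 => (hcoeff j).mpr (hdvd j h1 h2)), hdegM m hmn]
  intro j hj
  rw [hdegM j (by omega), hdegM m hmn]
  have : j * (q - 1) < m * (q - 1) := Nat.mul_lt_mul_of_pos_right hj (by omega)
  omega

theorem statement8_general {F : Type*} [Field F] [Fintype F] (p r : ℕ) (hp : p.Prime)
    (q : ℕ) (hq : q = p ^ r)
    (hcard : Fintype.card F = q)
    (P : F[X]) (hPmonic : P.Monic) (hPdeg : P.degree = 1)
    (l x : ℕ) (hl1 : 1 ≤ l) (hl2 : l ≤ q - 2)
    (k : ℕ) (hk : k = x * (q - 1) + l * (q + 1))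
    (x₀ : ℕ) (hx₀ : x₀ = min x (l - 1))
    (S : F[X])
    (hS : S = ∑ j ∈ Finset.range (x₀ + 1),
      (-1) ^ (l + j) * ((l - 1).choose j : F[X]) * (x.choose j : F[X]) *
        P ^ (l - j) * (X ^ q - X) ^ j) :
    S ≠ 0 ∧
    ∃ jmax ≤ x₀, ¬ p ∣ (l - 1).choose jmax * x.choose jmax ∧
      (∀ j, jmax < j → j ≤ x₀ → p ∣ (l - 1).choose j * x.choose j) ∧
      S.natDegree = l + jmax * (q - 1) ∧
      0 < S.natDegree ∧ 2 * S.natDegree < k := by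
  have : Fact p.Prime := ⟨hp⟩
  have : CharP F p := charP_of_card_eq_prime_pow (hcard.trans hq)
  set good : ℕ → Prop := fun j => ¬ p ∣ (l - 1).choose j * x.choose j
  set jmax := Nat.findGreatest good x₀
  have hjmax : jmax ≤ x₀ := Nat.findGreatest_le x₀
  have hgood : good jmax :=
    Nat.findGreatest_spec (Nat.zero_le _) (by simpa [good] using hp.not_dvd_one)
  have hbad : ∀ j, jmax < j → j ≤ x₀ → p ∣ (l - 1).choose j * x.choose j :=
    fun j h1 h2 => not_not.mp (Nat.findGreatest_is_greatest h1 h2)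
  have hdeg : S.natDegree = l + jmax * (q - 1) := hS ▸
    natDegree_sum_choose_mul_pow_mul_X_pow_sub_X_pow hPmonic
      (natDegree_eq_of_degree_eq_some hPdeg) (by omega) (by omega) hjmax hgood hbad
  have hpos : 0 < S.natDegree := by omega
  refine ⟨ne_zero_of_natDegree_gt hpos, jmax, hjmax, hgood, hbad, hdeg, hpos, ?_⟩
  rw [hdeg, hk]
  exact two_mul_add_mul_lt hl1 (by omega) (by omega) (by omega)

/-- Let `p` be an odd prime, `q = p^r`, and `P ∈ 𝔽_q[T]` monic of
degree `1`.  Let `1 ≤ l ≤ q − 2`, `0 ≤ x ≤ q`, `k = x(q−1) + l(q+1)`,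
`x₀ = min(x, l−1)`, and
`S = Σ_{j=0}^{x₀} (−1)^(l+j) · C(l−1, j) · C(x, j) · P^(l−j) · (T^q − T)^j ∈ 𝔽_q[T]`
(binomial coefficients reduced mod `p`).  Then `S ≠ 0`, `deg S = l + j_max·(q−1)`
where `j_max` is the largest `0 ≤ j ≤ x₀` with `p ∤ C(l−1, j)·C(x, j)` (a nonempty
set of indices, containing `j = 0`), and `0 < deg S < k/2`. -/
theorem statement8 {F : Type*} [Field F] [Fintype F] (p r : ℕ) (hp : p.Prime)
    (hodd : Odd p) (hr : 0 < r) (q : ℕ) (hq : q = p ^ r)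
    (hcard : Fintype.card F = q)
    (P : F[X]) (hPmonic : P.Monic) (hPdeg : P.degree = 1)
    (l x : ℕ) (hl1 : 1 ≤ l) (hl2 : l ≤ q - 2) (hx : x ≤ q)
    (k : ℕ) (hk : k = x * (q - 1) + l * (q + 1))
    (x₀ : ℕ) (hx₀ : x₀ = min x (l - 1))
    (S : F[X])
    (hS : S = ∑ j ∈ Finset.range (x₀ + 1),
      (-1) ^ (l + j) * ((l - 1).choose j : F[X]) * (x.choose j : F[X]) *
        P ^ (l - j) * (X ^ q - X) ^ j) :
    S ≠ 0 ∧
    ∃ jmax ≤ x₀, ¬ p ∣ (l - 1).choose jmax * x.choose jmax ∧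
      (∀ j, jmax < j → j ≤ x₀ → p ∣ (l - 1).choose j * x.choose j) ∧
      S.natDegree = l + jmax * (q - 1) ∧
      0 < S.natDegree ∧ 2 * S.natDegree < k :=
  statement8_general p r hp q hq hcard P hPmonic hPdeg l x hl1 hl2 k hk x₀ hx₀ S hS
end

section
/- Let p be an odd prime, q = p^r, and let P ∈ 𝔽_q[T] be a monic polynomial of degree 1. Let x be an integer with 0 ≤ x ≤ q, set k = x(q−1) + (q²−1), and set y₀ = min(x, q−2). Define the polynomial S = Σ_{j=0}^{y₀} (−1)^{j+1} · C(q−2, j) · C(x, j) · P^{q−1−j} · (T^q − T)^j ∈ 𝔽_q[T], where C(·,·) are integer binomial coefficients reduced modulo p. Then S ≠ 0; its degree equals (j_max + 1)·(q−1), where j_max is the largest index 0 ≤ j ≤ y₀ with C(q−2, j)·C(x, j) not divisible by p (this set of indices is nonempty since it contains j = 0); and 0 < deg S < k/2. -/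
/-!
Since `P` has degree `1` and `T^q - T` has degree `q`, the `j`-th summand of `S` is either zero
(when `p` divides its binomial coefficient) or of degree exactly `(q-1-j) + jq = (j+1)(q-1)`.
These degrees are strictly increasing in `j`, so the last surviving summand, `j = j_max`,
determines the degree of `S`; the bound `2 deg S < k` then follows from `j_max ≤ min(x, q-2)`.
-/

open Polynomial Finset

theorem natDegree_sum_range_succ_of_natDegree_lt {R : Type*} [Semiring R] {f : ℕ → R[X]}
    {n : ℕ} (h : ∀ j < n, (f j).natDegree < (f n).natDegree) :
    (∑ j ∈ range (n + 1), f j).natDegree = (f n).natDegree := by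
  rcases n.eq_zero_or_pos with rfl | hn
  · simp
  have hfn : f n ≠ 0 := ne_zero_of_natDegree_gt (h 0 hn)
  rw [sum_range_succ, natDegree_add_eq_right_of_degree_lt]
  refine (degree_sum_le _ _).trans_lt ((Finset.sup_lt_iff ?_).2 fun j hj ↦ ?_)
  · exact bot_lt_iff_ne_bot.2 (degree_ne_bot.2 hfn)
  · exact degree_lt_degree (h j (mem_range.1 hj))

theorem two_mul_succ_mul_pred_lt {j x q : ℕ} (hq : 2 ≤ q) (hjx : j ≤ x) (hjq : j ≤ q - 2) :
    2 * ((j + 1) * (q - 1)) < x * (q - 1) + (q ^ 2 - 1) := by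
  obtain ⟨q, rfl⟩ : ∃ q', q = q' + 2 := ⟨q - 2, by omega⟩
  have hsq : (q + 2) ^ 2 - 1 = q * q + 4 * q + 3 := by
    have : (q + 2) ^ 2 = q * q + 4 * q + 4 := by ring
    omega
  rw [hsq, show q + 2 - 1 = q + 1 by omega]
  simp only [Nat.add_sub_cancel] at hjq
  nlinarith

section HeckeSummand

variable {F : Type*} [Field F]

noncomputable def heckeSummand (q x : ℕ) (P : F[X]) (j : ℕ) : F[X] :=
  (-1) ^ (j + 1) * ((q - 2).choose j : F[X]) * (x.choose j : F[X]) *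
    P ^ (q - 1 - j) * (X ^ q - X) ^ j

variable (p : ℕ) [CharP F p] {q x : ℕ} {P : F[X]} {j : ℕ}

theorem heckeSummand_eq_zero (h : p ∣ (q - 2).choose j * x.choose j) :
    heckeSummand q x P j = 0 := by
  have hcoeff : ((q - 2).choose j : F[X]) * (x.choose j : F[X]) = 0 := by
    exact_mod_cast (CharP.cast_eq_zero_iff F[X] p _).2 h
  rw [heckeSummand, mul_assoc ((-1 : F[X]) ^ (j + 1)), hcoeff]
  simp

theorem natDegree_heckeSummand (hP : P.natDegree = 1) (hq : 2 ≤ q) (hj : j ≤ q - 1)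
    (h : ¬ p ∣ (q - 2).choose j * x.choose j) :
    (heckeSummand q x P j).natDegree = (j + 1) * (q - 1) := by
  have hconst : (-1 : F[X]) ^ (j + 1) * ((q - 2).choose j : F[X]) * (x.choose j : F[X])
      = C ((-1) ^ (j + 1) * (((q - 2).choose j * x.choose j : ℕ) : F)) := by
    simp [mul_assoc]
  have hc : (-1 : F) ^ (j + 1) * (((q - 2).choose j * x.choose j : ℕ) : F) ≠ 0 :=
    mul_ne_zero (pow_ne_zero _ (neg_ne_zero.2 one_ne_zero))
      (by rwa [Ne, CharP.cast_eq_zero_iff F p])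
  have hP0 : P ≠ 0 := ne_zero_of_natDegree_gt (hP ▸ Nat.zero_lt_one)
  have hW0 : (X ^ q - X : F[X]) ≠ 0 := FiniteField.X_pow_card_sub_X_ne_zero F (by omega)
  have hdeg : q - 1 - j + j * q = (j + 1) * (q - 1) := by
    obtain ⟨d, rfl⟩ : ∃ d, q = j + d + 1 := ⟨q - 1 - j, by omega⟩
    rw [show j + d + 1 - 1 - j = d by omega, show j + d + 1 - 1 = j + d by omega]
    ring
  rw [heckeSummand, hconst, mul_assoc, natDegree_C_mul hc,
    natDegree_mul (pow_ne_zero _ hP0) (pow_ne_zero _ hW0), natDegree_pow, natDegree_pow, hP,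
    FiniteField.X_pow_card_sub_X_natDegree_eq F (by omega), mul_one, hdeg]

theorem natDegree_sum_heckeSummand (hP : P.natDegree = 1) (hq : 2 ≤ q) {n jmax : ℕ}
    (hjn : jmax ≤ n) (hjq : jmax ≤ q - 1) (hjmax : ¬ p ∣ (q - 2).choose jmax * x.choose jmax)
    (hgreatest : ∀ j, jmax < j → j ≤ n → p ∣ (q - 2).choose j * x.choose j) :
    (∑ j ∈ range (n + 1), heckeSummand q x P j).natDegree = (jmax + 1) * (q - 1) := by
  have htrunc : ∑ j ∈ range (n + 1), heckeSummand q x P j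
      = ∑ j ∈ range (jmax + 1), heckeSummand q x P j := by
    refine (sum_subset (range_subset_range.2 (by omega)) fun j hj hj' ↦ ?_).symm
    simp only [mem_range] at hj hj'
    exact heckeSummand_eq_zero p (hgreatest j (by omega) (by omega))
  rw [htrunc, natDegree_sum_range_succ_of_natDegree_lt, natDegree_heckeSummand p hP hq hjq hjmax]
  intro j hj
  rw [natDegree_heckeSummand p hP hq hjq hjmax]
  by_cases hdvd : p ∣ (q - 2).choose j * x.choose j
  · rw [heckeSummand_eq_zero p hdvd, natDegree_zero]
    exact Nat.mul_pos (Nat.succ_pos _) (by omega)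
  · rw [natDegree_heckeSummand p hP hq (by omega) hdvd]
    exact Nat.mul_lt_mul_of_pos_right (by omega) (by omega)

end HeckeSummand

theorem statement9_general {F : Type*} [Field F] [Fintype F] (p r : ℕ) (hp : p.Prime)
    (q : ℕ) (hq : q = p ^ r)
    (hcard : Fintype.card F = q)
    (P : F[X]) (hPdeg : P.degree = 1)
    (x : ℕ)
    (k : ℕ) (hk : k = x * (q - 1) + (q ^ 2 - 1))
    (y₀ : ℕ) (hy₀ : y₀ = min x (q - 2))
    (S : F[X])
    (hS : S = ∑ j ∈ Finset.range (y₀ + 1),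
      (-1) ^ (j + 1) * ((q - 2).choose j : F[X]) * (x.choose j : F[X]) *
        P ^ (q - 1 - j) * (X ^ q - X) ^ j) :
    S ≠ 0 ∧
    ∃ jmax ≤ y₀, ¬ p ∣ (q - 2).choose jmax * x.choose jmax ∧
      (∀ j, jmax < j → j ≤ y₀ → p ∣ (q - 2).choose j * x.choose j) ∧
      S.natDegree = (jmax + 1) * (q - 1) ∧
      0 < S.natDegree ∧ 2 * S.natDegree < k := by
  have := Fact.mk hp
  have : CharP F p := charP_of_card_eq_prime_pow (hcard.trans hq)
  have hq2 : 2 ≤ q := hcard ▸ Fintype.one_lt_card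
  have hP : P.natDegree = 1 := natDegree_eq_of_degree_eq_some hPdeg
  set jmax := Nat.findGreatest (fun j ↦ ¬ p ∣ (q - 2).choose j * x.choose j) y₀
  have hjy : jmax ≤ y₀ := Nat.findGreatest_le y₀
  have hjmax : ¬ p ∣ (q - 2).choose jmax * x.choose jmax :=
    Nat.findGreatest_spec (P := fun j ↦ ¬ p ∣ (q - 2).choose j * x.choose j)
      (Nat.zero_le y₀) (by simpa using hp.ne_one)
  have hgreatest : ∀ j, jmax < j → j ≤ y₀ → p ∣ (q - 2).choose j * x.choose j :=
    fun j hj hjy ↦ not_not.1 (Nat.findGreatest_is_greatest hj hjy)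
  have hSdeg : S.natDegree = (jmax + 1) * (q - 1) :=
    hS ▸ natDegree_sum_heckeSummand p hP hq2 hjy (by omega) hjmax hgreatest
  have hSpos : 0 < S.natDegree := hSdeg ▸ Nat.mul_pos (Nat.succ_pos _) (by omega)
  refine ⟨ne_zero_of_natDegree_gt hSpos, jmax, hjy, hjmax, hgreatest, hSdeg, hSpos, ?_⟩
  rw [hSdeg, hk]
  exact two_mul_succ_mul_pred_lt hq2 (by omega) (by omega)

/-- Let `p` be an odd prime, `q = p^r`, and `P ∈ 𝔽_q[T]` monic of
degree `1`.  Let `0 ≤ x ≤ q`, `k = x(q−1) + (q²−1)`, `y₀ = min(x, q−2)`, and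
`S = Σ_{j=0}^{y₀} (−1)^(j+1) · C(q−2, j) · C(x, j) · P^(q−1−j) · (T^q − T)^j ∈ 𝔽_q[T]`
(binomial coefficients reduced mod `p`).  Then `S ≠ 0`,
`deg S = (j_max + 1)·(q−1)` where `j_max` is the largest `0 ≤ j ≤ y₀` with
`p ∤ C(q−2, j)·C(x, j)` (a nonempty set of indices, containing `j = 0`), and
`0 < deg S < k/2`. -/
theorem statement9 {F : Type*} [Field F] [Fintype F] (p r : ℕ) (hp : p.Prime)
    (hodd : Odd p) (hr : 0 < r) (q : ℕ) (hq : q = p ^ r)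
    (hcard : Fintype.card F = q)
    (P : F[X]) (hPmonic : P.Monic) (hPdeg : P.degree = 1)
    (x : ℕ) (hx : x ≤ q)
    (k : ℕ) (hk : k = x * (q - 1) + (q ^ 2 - 1))
    (y₀ : ℕ) (hy₀ : y₀ = min x (q - 2))
    (S : F[X])
    (hS : S = ∑ j ∈ Finset.range (y₀ + 1),
      (-1) ^ (j + 1) * ((q - 2).choose j : F[X]) * (x.choose j : F[X]) *
        P ^ (q - 1 - j) * (X ^ q - X) ^ j) :
    S ≠ 0 ∧
    ∃ jmax ≤ y₀, ¬ p ∣ (q - 2).choose jmax * x.choose jmax ∧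
      (∀ j, jmax < j → j ≤ y₀ → p ∣ (q - 2).choose j * x.choose j) ∧
      S.natDegree = (jmax + 1) * (q - 1) ∧
      0 < S.natDegree ∧ 2 * S.natDegree < k :=
  statement9_general p r hp q hq hcard P hPdeg x k hk y₀ hy₀ S hS
end
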